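/- Call a finite word w over Σ₂ = {0,1} valid if no subword x of w with |x| = 5 has its reversal x^R also a subword of w. Let w be a valid word of length 15 of the form y y'' with y ∈ B and y'' ∈ Σ₂*. Then y is a prefix of y''. -/
import Mathlib

/-- `w` is valid: no subword `x` of `w` with `|x| = 5` has `x^R` also a subword of `w`. -/
def Valid (w : List (Fin 2)) : Prop :=
  ∀ x : List (Fin 2), x <:+: w → x.length = 5 → ¬ x.reverse <:+: w

/-- The length-5 infixes of `w`. -/
def infixes5 (w : List (Fin 2)) : List (List (Fin 2)) :=
  (w.tails.map (fun t => t.take 5)).filter (fun l => l.length == 5)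

lemma mem_infixes5 {w l : List (Fin 2)} : l ∈ infixes5 w ↔ l <:+: w ∧ l.length = 5 := by
  constructor
  · intro h
    rw [infixes5, List.mem_filter, List.mem_map] at h
    obtain ⟨⟨t, ht, rfl⟩, hl⟩ := h
    exact ⟨(List.take_prefix 5 t).isInfix.trans ((List.mem_tails _ _).mp ht).isInfix,
      by simpa using hl⟩
  · rintro ⟨⟨s, t, rfl⟩, hlen⟩
    rw [infixes5, List.mem_filter, List.mem_map]
    refine ⟨⟨l ++ t, (List.mem_tails _ _).mpr ?_, List.take_left' hlen⟩, by simpa using hlen⟩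
    rw [List.append_assoc]
    exact List.suffix_append s (l ++ t)

/-- Boolean validity check. -/
def validB (w : List (Fin 2)) : Bool :=
  (infixes5 w).all (fun x => !(decide (x.reverse ∈ infixes5 w)))

lemma validB_of_valid (w : List (Fin 2)) (h : Valid w) : validB w = true := by
  rw [validB, List.all_eq_true]
  intro x hx
  rw [Bool.not_eq_true', decide_eq_false_iff_not]
  intro hrev
  obtain ⟨hinf, hlen⟩ := mem_infixes5.mp hx
  exact h x hinf hlen (mem_infixes5.mp hrev).1

/-- `validB` is antitone under append: validity of `u ++ v` implies validity of `u`. -/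
lemma validB_mono {u v : List (Fin 2)} (h : validB (u ++ v) = true) : validB u = true := by
  rw [validB, List.all_eq_true] at h ⊢
  intro x hx
  obtain ⟨hinf, hlen⟩ := mem_infixes5.mp hx
  have hx' : x ∈ infixes5 (u ++ v) :=
    mem_infixes5.mpr ⟨hinf.trans (u.prefix_append v).isInfix, hlen⟩
  have := h x hx'
  rw [Bool.not_eq_true', decide_eq_false_iff_not] at this ⊢
  intro hrev
  obtain ⟨hinf', hlen'⟩ := mem_infixes5.mp hrev
  exact this (mem_infixes5.mpr ⟨hinf'.trans (u.prefix_append v).isInfix, hlen'⟩)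

/-- Pruned search: extend `z` by `n` more letters in all valid ways; check `y` is a prefix. -/
def check (y : List (Fin 2)) : ℕ → List (Fin 2) → Bool
  | 0, z => y.isPrefixOf z
  | n+1, z =>
      (!(validB (y ++ (z ++ [0]))) || check y n (z ++ [0])) &&
      (!(validB (y ++ (z ++ [1]))) || check y n (z ++ [1]))

lemma check_sound (y : List (Fin 2)) : ∀ n z (y'' : List (Fin 2)), check y n z = true →
    y''.length = n → validB (y ++ (z ++ y'')) = true → y <+: z ++ y'' := by
  intro n
  induction n with
  | zero =>
    intro z y'' hc hlen _
    rw [List.length_eq_zero_iff.mp hlen, List.append_nil]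
    exact List.isPrefixOf_iff_prefix.mp hc
  | succ n ih =>
    intro z y'' hc hlen hv
    match y'' with
    | a :: t =>
      have hassoc : z ++ [a] ++ t = z ++ a :: t := by simp
      have hvp : validB (y ++ (z ++ [a])) = true := by
        apply validB_mono (v := t)
        rw [show (y ++ (z ++ [a])) ++ t = y ++ (z ++ a :: t) by simp [List.append_assoc]]
        exact hv
      have hc' : check y (n+1) z = true := hc
      rw [check, Bool.and_eq_true, Bool.or_eq_true, Bool.or_eq_true] at hc'
      have hcn : check y n (z ++ [a]) = true := by
        have ha : a = 0 ∨ a = 1 := by omega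
        rcases ha with rfl | rfl
        · rcases hc'.1 with h | h
          · rw [Bool.not_eq_true', hvp] at h; exact absurd h (by simp)
          · exact h
        · rcases hc'.2 with h | h
          · rw [Bool.not_eq_true', hvp] at h; exact absurd h (by simp)
          · exact h
      have := ih (z ++ [a]) t hcn (by simpa using hlen)
        (by rw [show y ++ (z ++ [a] ++ t) = y ++ (z ++ a :: t) by simp [List.append_assoc]]
            exact hv)
      rwa [hassoc] at this

def rots : List (List (Fin 2)) :=
  ([0, 0, 1, 0, 1, 1] : List (Fin 2)).cyclicPermutations ++
  ([1, 1, 0, 1, 0, 0] : List (Fin 2)).cyclicPermutations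

set_option maxRecDepth 100000 in
lemma keyB : (rots.all fun y => check y 9 []) = true := by decide

/-- If `w = y ++ y''` is a valid binary word of length 15, where `y` is a cyclic shift
of 001011 or of its complement 110100, then `y` is a prefix of `y''`. -/
theorem stmt_13 (w y y'' : List (Fin 2)) (hval : Valid w) (hlen : w.length = 15)
    (hyB : y ~r ([0, 0, 1, 0, 1, 1] : List (Fin 2)) ∨ y ~r ([1, 1, 0, 1, 0, 0] : List (Fin 2)))
    (hw : w = y ++ y'') :
    y <+: y'' := by
  have hyrots : y ∈ rots := by
    rw [rots, List.mem_append, List.mem_cyclicPermutations_iff, List.mem_cyclicPermutations_iff]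
    exact hyB
  have hylen : y.length = 6 := by
    rcases hyB with h | h <;> simpa using h.perm.length_eq
  have hy2len : y''.length = 9 := by
    rw [hw, List.length_append, hylen] at hlen; omega
  have hc : check y 9 [] = true := List.all_eq_true.mp keyB y hyrots
  have hv : validB (y ++ ([] ++ y'')) = true := by
    rw [List.nil_append, ← hw]; exact validB_of_valid w hval
  simpa using check_sound y 9 [] y'' hc hy2len hv
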